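/- Let a, α, ε ∈ ℝ, b > 0, and let x, y, q : I → ℝ be differentiable functions on a real interval I with y(t) > 0 and 1 + a·y(t) > 0 for all t, satisfying x'(t) = y(t)·( ε(1 + α y(t)) + x(t)(x(t) − q(t)) ), y'(t) = y(t)²·(x(t) − q(t)), q'(t) = q(t)·(x(t) − q(t))·( b + a·y(t)²/(1 + a·y(t)) ). Then the function t ↦ q(t)·exp(b/y(t))/(1 + a·y(t)) is constant on I. In particular, if q(t₀) = (1 + a·y(t₀))·exp(−b/y(t₀)) for some t₀, then q(t) = (1 + a·y(t))·exp(−b/y(t)) for all t ∈ I. -/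

import Mathlib

open Real

/-!
Along the flow the single factor `w = x - q` drives both `y' = y² w` and
`q' = q w (b + a y² / (1 + a y))`. Since `(b / y)' = -b w` and `(1 + a y)' = a y² w`, the
logarithmic derivatives of `q`, `exp (b / y)` and `1 + a y` cancel, so
`q · exp (b / y) / (1 + a y)` is constant; it equals `1` exactly on `Q`.
-/

theorem Convex.eq_of_hasDerivWithinAt_zero {𝕜 G : Type*} [RCLike 𝕜] [NormedAddCommGroup G]
    [NormedSpace 𝕜 G] {f : 𝕜 → G} {s : Set 𝕜} (hs : Convex ℝ s)
    (hf : ∀ t ∈ s, HasDerivWithinAt f 0 s t) {u v : 𝕜} (hu : u ∈ s) (hv : v ∈ s) :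
    f u = f v := by
  have h := hs.norm_image_sub_le_of_norm_hasDerivWithin_le hf (fun _ _ => norm_zero.le) hv hu
  rw [zero_mul, norm_le_zero_iff, sub_eq_zero] at h
  exact h

section FlatExponential

variable {a b w : ℝ} {y q : ℝ → ℝ} {s : Set ℝ} {t : ℝ}

theorem hasDerivWithinAt_exp_div_of_hasDerivWithinAt_sq_mul (hyt : y t ≠ 0)
    (hy' : HasDerivWithinAt y (y t ^ 2 * w) s t) :
    HasDerivWithinAt (fun t => exp (b / y t)) (exp (b / y t) * (-b * w)) s t := by
  have hdiv := (hasDerivWithinAt_const t s b).fun_div hy' hyt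
  refine hdiv.exp.congr_deriv ?_
  field_simp
  ring

theorem hasDerivWithinAt_mul_exp_div_one_add_mul_eq_zero (hyt : y t ≠ 0)
    (hayt : 1 + a * y t ≠ 0) (hy' : HasDerivWithinAt y (y t ^ 2 * w) s t)
    (hq' : HasDerivWithinAt q (q t * w * (b + a * y t ^ 2 / (1 + a * y t))) s t) :
    HasDerivWithinAt (fun t => q t * exp (b / y t) / (1 + a * y t)) 0 s t := by
  have hnum := hq'.fun_mul (hasDerivWithinAt_exp_div_of_hasDerivWithinAt_sq_mul (b := b) hyt hy')
  have hden := (hy'.const_mul a).const_add 1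
  refine (hnum.fun_div hden hayt).congr_deriv ?_
  field_simp
  ring

theorem mul_exp_div_one_add_mul_eq_one_iff {y q : ℝ} (hay : 1 + a * y ≠ 0) :
    q * exp (b / y) / (1 + a * y) = 1 ↔ q = (1 + a * y) * exp (-(b / y)) := by
  rw [div_eq_one_iff_eq hay, exp_neg, ← div_eq_mul_inv, eq_div_iff (exp_pos _).ne']

end FlatExponential

theorem stmt7_general (a b : ℝ) (I : Set ℝ) (hI : I.OrdConnected)
    (x y q : ℝ → ℝ)
    (hy : ∀ t ∈ I, 0 < y t)
    (hay : ∀ t ∈ I, 0 < 1 + a * y t)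
    (hy' : ∀ t ∈ I, HasDerivWithinAt y ((y t) ^ 2 * (x t - q t)) I t)
    (hq' : ∀ t ∈ I, HasDerivWithinAt q
      (q t * (x t - q t) * (b + a * (y t) ^ 2 / (1 + a * y t))) I t) :
    (∀ s ∈ I, ∀ t ∈ I,
      q s * Real.exp (b / y s) / (1 + a * y s) = q t * Real.exp (b / y t) / (1 + a * y t)) ∧
    (∀ t₀ ∈ I, q t₀ = (1 + a * y t₀) * Real.exp (-(b / y t₀)) →
      ∀ t ∈ I, q t = (1 + a * y t) * Real.exp (-(b / y t))) := by
  have hconst : ∀ s ∈ I, ∀ t ∈ I,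
      q s * exp (b / y s) / (1 + a * y s) = q t * exp (b / y t) / (1 + a * y t) :=
    fun s hs t ht => hI.convex.eq_of_hasDerivWithinAt_zero (fun u hu =>
      hasDerivWithinAt_mul_exp_div_one_add_mul_eq_zero (hy u hu).ne' (hay u hu).ne'
        (hy' u hu) (hq' u hu)) hs ht
  refine ⟨hconst, fun t₀ ht₀ hQ t ht => ?_⟩
  rw [← mul_exp_div_one_add_mul_eq_one_iff (hay t₀ ht₀).ne'] at hQ
  rwa [← mul_exp_div_one_add_mul_eq_one_iff (hay t ht).ne', hconst t ht t₀ ht₀]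

/-- Invariance of the set `Q : q = (1+ay)·exp(−b/y)` for the extended aircraft
ground-dynamics system
`x' = y(ε(1+αy) + x(x−q)), y' = y²(x−q), q' = q(x−q)(b + ay²/(1+ay))`. -/
theorem stmt7 (a α ε b : ℝ) (hb : 0 < b) (I : Set ℝ) (hI : I.OrdConnected)
    (x y q : ℝ → ℝ)
    (hy : ∀ t ∈ I, 0 < y t)
    (hay : ∀ t ∈ I, 0 < 1 + a * y t)
    (hx' : ∀ t ∈ I, HasDerivWithinAt x
      (y t * (ε * (1 + α * y t) + x t * (x t - q t))) I t)
    (hy' : ∀ t ∈ I, HasDerivWithinAt y ((y t) ^ 2 * (x t - q t)) I t)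
    (hq' : ∀ t ∈ I, HasDerivWithinAt q
      (q t * (x t - q t) * (b + a * (y t) ^ 2 / (1 + a * y t))) I t) :
    (∀ s ∈ I, ∀ t ∈ I,
      q s * Real.exp (b / y s) / (1 + a * y s) = q t * Real.exp (b / y t) / (1 + a * y t)) ∧
    (∀ t₀ ∈ I, q t₀ = (1 + a * y t₀) * Real.exp (-(b / y t₀)) →
      ∀ t ∈ I, q t = (1 + a * y t) * Real.exp (-(b / y t))) :=
  stmt7_general a b I hI x y q hy hay hy' hq'
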